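/- Let Λ be a set of pairwise non-*-associate irreducibles of R. For each λ ∈ Λ let (x_{λ,i})_{i ∈ ℕ} be a sequence of elements of C_λ such that for every finitely supported family of integers (r_i), if the linear combination Σ_i r_i·x_{λ,i} lies in C^λ then r_i = 0 for all i. Let S be the subgroup of C generated by Δ together with all the elements x_{λ,i} (λ ∈ Λ, i ∈ ℕ). Then: (1) for each λ ∈ Λ, S ∩ C_λ equals the subgroup generated by Δ and {x_{λ,i} : i ∈ ℕ}; (2) for each λ ∈ Λ, the quotient (S ∩ C_λ)/Δ is free abelian with basis the classes of the x_{λ,i}, and the natural map (S ∩ C_λ)/Δ → S/(S ∩ C^λ) is an isomorphism; (3) the natural map ⊕_{λ∈Λ} (S ∩ C_λ)/Δ → S/Δ induced by the inclusions is an isomorphism; (4) the natural map S/Δ → ⊕_{λ∈Λ} S/(S ∩ C^λ) induced by the projections is an isomorphism. -/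

import Mathlib

open Classical in
/-- `S(λ)`: `λ` itself if `λ` is an associate of its involutive image `λ*`,
and `λ · λ*` otherwise. -/
noncomputable def Sdual {R : Type*} [CommRing R] (σ : R →+* R) (l : R) : R :=
  if Associated l (σ l) then l else l * σ l

/-- `λ` and `μ` are `*`-associates: `λ` is an associate of `μ` or of `μ* = σ μ`. -/
def StarAssoc {R : Type*} [CommRing R] (σ : R →+* R) (l m : R) : Prop :=
  Associated l m ∨ Associated l (σ m)

/-- The subset `Δ ⊆ C` of classes of elements whose `χ`-value is a unit. -/
def DeltaSet {K C R : Type*} [AddCommMonoid K] [AddCommGroup C] [CommRing R]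
    (π : K →+ C) (χ : K → R) : Set C :=
  {c | ∃ k, π k = c ∧ IsUnit (χ k)}

/-- The `λ`-primary part `C_λ ⊆ C`: classes of elements whose `χ`-value is an
associate of a power of `S(λ)`. -/
def Cprim {K C R : Type*} [AddCommMonoid K] [AddCommGroup C] [CommRing R]
    (σ : R →+* R) (π : K →+ C) (χ : K → R) (l : R) : Set C :=
  {c | ∃ k, π k = c ∧ ∃ n : ℕ, Associated (χ k) (Sdual σ l ^ n)}

/-- The coprimary part `C^λ ⊆ C`: classes of elements whose `χ`-value is not
divisible by `λ`. -/
def Cco {K C R : Type*} [AddCommMonoid K] [AddCommGroup C] [CommRing R]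
    (π : K →+ C) (χ : K → R) (l : R) : Set C :=
  {c | ∃ k, π k = c ∧ ¬ l ∣ χ k}

/-- The subgroup `S ≤ C` generated by `Δ` together with the elements `x l i`
for `l ∈ Λ` and `i ∈ ℕ`. -/
def Sgen {K C R : Type*} [AddCommMonoid K] [AddCommGroup C] [CommRing R]
    (π : K →+ C) (χ : K → R) (Λ : Set R) (x : R → ℕ → C) : AddSubgroup C :=
  AddSubgroup.closure (DeltaSet π χ ∪ {c | ∃ l ∈ Λ, ∃ i : ℕ, c = x l i})

/-!
Write an element of `S` as `d + ∑ y_λ` with `d ∈ Δ` and `y_λ` in the span of the `x λ i`.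
Distinct non-`*`-associate primes `λ ≠ μ` give `C_μ ⊆ C^λ`, so `y_λ` is congruent to the whole
element modulo `C^λ`, and the independence of the `x λ i` modulo `C^λ` determines `y_λ`.
All four statements follow formally from this, for arbitrary subgroups `Δ ⊆ C_λ ∩ C^λ`
with `C_μ ⊆ C^λ` for `λ ≠ μ`.
-/

namespace PrimaryDecomposition

variable {ι C : Type*} [AddCommGroup C]

/-- `P l` and `Q l` play the roles of the primary part `C_λ` and the coprimary part `C^λ`. -/
structure IsIndependentPrimaryFamily (Λ : Set ι) (Δ : AddSubgroup C) (P Q : ι → AddSubgroup C)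
    (x : ι → ℕ → C) : Prop where
  delta_le_primary : ∀ l ∈ Λ, Δ ≤ P l
  delta_le_coprimary : ∀ l ∈ Λ, Δ ≤ Q l
  primary_le_coprimary : ∀ l ∈ Λ, ∀ m ∈ Λ, l ≠ m → P m ≤ Q l
  mem_primary : ∀ l ∈ Λ, ∀ i, x l i ∈ P l
  independent : ∀ l ∈ Λ, ∀ r : ℕ →₀ ℤ, (r.sum fun i ri => ri • x l i) ∈ Q l → r = 0

def familyClosure (Δ : AddSubgroup C) (Λ : Set ι) (x : ι → ℕ → C) : AddSubgroup C :=
  AddSubgroup.closure (↑Δ ∪ {c | ∃ l ∈ Λ, ∃ i : ℕ, c = x l i})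

variable {Λ : Set ι} {Δ : AddSubgroup C} {P Q : ι → AddSubgroup C} {x : ι → ℕ → C} {l : ι} {c : C}

theorem delta_le_familyClosure : Δ ≤ familyClosure Δ Λ x :=
  fun _ hd => AddSubgroup.subset_closure (Or.inl hd)

theorem closure_range_le_familyClosure (hl : l ∈ Λ) :
    AddSubgroup.closure (Set.range (x l)) ≤ familyClosure Δ Λ x :=
  (AddSubgroup.closure_le _).mpr <| Set.range_subset_iff.mpr fun i =>
    AddSubgroup.subset_closure (Or.inr ⟨l, hl, i, rfl⟩)

theorem exists_eq_add_finsuppSum_of_mem_familyClosure (hc : c ∈ familyClosure Δ Λ x) :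
    ∃ d ∈ Δ, ∃ y : ι →₀ C, ↑y.support ⊆ Λ ∧
      (∀ m, y m ∈ AddSubgroup.closure (Set.range (x m))) ∧ c = d + y.sum fun _ a => a := by
  classical
  induction hc using AddSubgroup.closure_induction with
  | mem g hg =>
    rcases hg with hg | ⟨l, hl, i, rfl⟩
    · exact ⟨g, hg, 0, by simp, by simp, by simp⟩
    · refine ⟨0, zero_mem _, Finsupp.single l (x l i), ?_, fun m => ?_, ?_⟩
      · intro m hm
        rwa [Finset.mem_singleton.mp (Finsupp.support_single_subset hm)]
      · rw [Finsupp.single_apply]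
        split_ifs with h
        · exact h ▸ AddSubgroup.subset_closure ⟨i, rfl⟩
        · exact zero_mem _
      · rw [Finsupp.sum_single_index rfl, zero_add]
  | zero => exact ⟨0, zero_mem _, 0, by simp, by simp, by simp⟩
  | add a b _ _ iha ihb =>
    obtain ⟨d, hd, y, hyΛ, hyX, rfl⟩ := iha
    obtain ⟨d', hd', y', hyΛ', hyX', rfl⟩ := ihb
    refine ⟨d + d', add_mem hd hd', y + y', ?_, fun m => add_mem (hyX m) (hyX' m), ?_⟩
    · exact (Finset.coe_subset.mpr Finsupp.support_add).trans
        (by simpa using Set.union_subset hyΛ hyΛ')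
    · rw [Finsupp.sum_add_index' (fun _ => rfl) (fun _ _ _ => rfl)]
      abel
  | neg a _ iha =>
    obtain ⟨d, hd, y, hyΛ, hyX, rfl⟩ := iha
    refine ⟨-d, neg_mem hd, -y, by simpa using hyΛ, fun m => neg_mem (hyX m), ?_⟩
    rw [Finsupp.sum_neg_index (fun _ => rfl), Finsupp.sum_neg]
    abel

namespace IsIndependentPrimaryFamily

theorem closure_range_le_primary (hF : IsIndependentPrimaryFamily Λ Δ P Q x) (hl : l ∈ Λ) :
    AddSubgroup.closure (Set.range (x l)) ≤ P l :=
  (AddSubgroup.closure_le _).mpr (Set.range_subset_iff.mpr (hF.mem_primary l hl))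

theorem eq_zero_of_mem_closure_range_of_mem_coprimary (hF : IsIndependentPrimaryFamily Λ Δ P Q x)
    (hl : l ∈ Λ) (hcX : c ∈ AddSubgroup.closure (Set.range (x l))) (hcQ : c ∈ Q l) : c = 0 := by
  obtain ⟨r, rfl⟩ := AddSubgroup.mem_closure_range_iff.mp hcX
  rw [hF.independent l hl r hcQ, Finsupp.sum_zero_index]

theorem sum_mem_coprimary {α : Type*} (hF : IsIndependentPrimaryFamily Λ Δ P Q x) (hl : l ∈ Λ)
    {s : Finset α} {f : α → ι} {c : α → C} (hs : ∀ a ∈ s, f a ∈ Λ ∧ l ≠ f a ∧ c a ∈ P (f a)) :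
    ∑ a ∈ s, c a ∈ Q l :=
  AddSubgroup.sum_mem _ fun a ha =>
    hF.primary_le_coprimary l hl (f a) (hs a ha).1 (hs a ha).2.1 (hs a ha).2.2

theorem finsuppSum_sub_apply_mem_coprimary (hF : IsIndependentPrimaryFamily Λ Δ P Q x)
    (hl : l ∈ Λ) {y : ι →₀ C} (hyΛ : ↑y.support ⊆ Λ) (hyP : ∀ m ∈ Λ, y m ∈ P m) :
    (y.sum fun _ a => a) - y l ∈ Q l := by
  classical
  have hsum : (y.sum fun _ a => a) - y l = ∑ m ∈ y.support.erase l, y m := by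
    by_cases hly : l ∈ y.support
    · exact (Finset.sum_erase_eq_sub hly).symm
    · rw [Finsupp.notMem_support_iff.mp hly, sub_zero, Finset.erase_eq_of_notMem hly]
      rfl
  rw [hsum]
  exact hF.sum_mem_coprimary hl fun m hm =>
    ⟨hyΛ (Finset.mem_of_mem_erase hm), (Finset.ne_of_mem_erase hm).symm,
      hyP m (hyΛ (Finset.mem_of_mem_erase hm))⟩

theorem mem_delta_of_forall_mem_coprimary (hF : IsIndependentPrimaryFamily Λ Δ P Q x)
    (hc : c ∈ familyClosure Δ Λ x) (hcQ : ∀ l ∈ Λ, c ∈ Q l) : c ∈ Δ := by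
  obtain ⟨d, hd, y, hyΛ, hyX, rfl⟩ := exists_eq_add_finsuppSum_of_mem_familyClosure hc
  have hyP : ∀ m ∈ Λ, y m ∈ P m := fun m hm => hF.closure_range_le_primary hm (hyX m)
  have hy : y = 0 := by
    ext m
    by_cases hm : m ∈ Λ
    · refine hF.eq_zero_of_mem_closure_range_of_mem_coprimary hm (hyX m) ?_
      have hyQ := hF.finsuppSum_sub_apply_mem_coprimary hm hyΛ hyP
      have hdQ := hF.delta_le_coprimary m hm hd
      have : y m = d + (y.sum fun _ a => a) - d - ((y.sum fun _ a => a) - y m) := by abel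
      rw [this]
      exact sub_mem (sub_mem (hcQ m hm) hdQ) hyQ
    · exact Finsupp.notMem_support_iff.mp fun h => hm (hyΛ h)
  simpa [hy] using hd

theorem mem_delta_of_mem_primary_of_mem_coprimary (hF : IsIndependentPrimaryFamily Λ Δ P Q x)
    (hl : l ∈ Λ) (hcS : c ∈ familyClosure Δ Λ x) (hcP : c ∈ P l) (hcQ : c ∈ Q l) : c ∈ Δ :=
  hF.mem_delta_of_forall_mem_coprimary hcS fun m hm => by
    rcases eq_or_ne m l with rfl | h
    exacts [hcQ, hF.primary_le_coprimary m hm l hl h hcP]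

theorem exists_sub_add_mem_coprimary (hF : IsIndependentPrimaryFamily Λ Δ P Q x)
    (hl : l ∈ Λ) (hcS : c ∈ familyClosure Δ Λ x) :
    ∃ d ∈ Δ, ∃ y ∈ AddSubgroup.closure (Set.range (x l)), c - (d + y) ∈ Q l := by
  obtain ⟨d, hd, y, hyΛ, hyX, rfl⟩ := exists_eq_add_finsuppSum_of_mem_familyClosure hcS
  refine ⟨d, hd, y l, hyX l, ?_⟩
  have hyP : ∀ m ∈ Λ, y m ∈ P m := fun m hm => hF.closure_range_le_primary hm (hyX m)
  convert hF.finsuppSum_sub_apply_mem_coprimary hl hyΛ hyP using 1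
  abel

theorem mem_sup_closure_range_of_mem_primary (hF : IsIndependentPrimaryFamily Λ Δ P Q x)
    (hl : l ∈ Λ) (hcS : c ∈ familyClosure Δ Λ x) (hcP : c ∈ P l) :
    c ∈ Δ ⊔ AddSubgroup.closure (Set.range (x l)) := by
  obtain ⟨d, hd, y, hyX, heQ⟩ := hF.exists_sub_add_mem_coprimary hl hcS
  have heS : c - (d + y) ∈ familyClosure Δ Λ x :=
    sub_mem hcS (add_mem (delta_le_familyClosure hd) (closure_range_le_familyClosure hl hyX))
  have heP : c - (d + y) ∈ P l :=
    sub_mem hcP (add_mem (hF.delta_le_primary l hl hd) (hF.closure_range_le_primary hl hyX))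
  have heΔ := hF.mem_delta_of_mem_primary_of_mem_coprimary hl heS heP heQ
  rw [show c = (c - (d + y) + d) + y by abel]
  exact AddSubgroup.add_mem_sup (add_mem heΔ hd) hyX

theorem familyClosure_inter_primary (hF : IsIndependentPrimaryFamily Λ Δ P Q x) (hl : l ∈ Λ) :
    (familyClosure Δ Λ x : Set C) ∩ P l = AddSubgroup.closure (↑Δ ∪ Set.range (x l)) := by
  ext c
  constructor
  · rintro ⟨hcS, hcP⟩
    rw [SetLike.mem_coe, AddSubgroup.closure_union, AddSubgroup.closure_eq]
    exact hF.mem_sup_closure_range_of_mem_primary hl hcS hcP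
  · intro hc
    rw [SetLike.mem_coe, AddSubgroup.closure_union, AddSubgroup.closure_eq] at hc
    exact ⟨sup_le delta_le_familyClosure (closure_range_le_familyClosure hl) hc,
      sup_le (hF.delta_le_primary l hl) (hF.closure_range_le_primary hl) hc⟩

theorem exists_sub_finsuppSum_mem_delta (hF : IsIndependentPrimaryFamily Λ Δ P Q x)
    (hl : l ∈ Λ) (hcS : c ∈ familyClosure Δ Λ x) (hcP : c ∈ P l) :
    ∃ r : ℕ →₀ ℤ, c - (r.sum fun i ri => ri • x l i) ∈ Δ := by
  obtain ⟨d, hd, y, hyX, rfl⟩ :=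
    AddSubgroup.mem_sup.mp (hF.mem_sup_closure_range_of_mem_primary hl hcS hcP)
  obtain ⟨r, rfl⟩ := AddSubgroup.mem_closure_range_iff.mp hyX
  exact ⟨r, by rwa [add_sub_cancel_right]⟩

theorem eq_zero_of_finsuppSum_mem_delta (hF : IsIndependentPrimaryFamily Λ Δ P Q x)
    (hl : l ∈ Λ) (r : ℕ →₀ ℤ) (hr : (r.sum fun i ri => ri • x l i) ∈ Δ) : r = 0 :=
  hF.independent l hl r (hF.delta_le_coprimary l hl hr)

theorem exists_primary_sub_mem_coprimary (hF : IsIndependentPrimaryFamily Λ Δ P Q x)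
    (hl : l ∈ Λ) (hcS : c ∈ familyClosure Δ Λ x) :
    ∃ D ∈ (familyClosure Δ Λ x : Set C) ∩ P l, c - D ∈ Q l := by
  obtain ⟨d, hd, y, hyX, hQ⟩ := hF.exists_sub_add_mem_coprimary hl hcS
  exact ⟨d + y, ⟨add_mem (delta_le_familyClosure hd) (closure_range_le_familyClosure hl hyX),
    add_mem (hF.delta_le_primary l hl hd) (hF.closure_range_le_primary hl hyX)⟩, hQ⟩

theorem exists_eq_add_sum_primary (hF : IsIndependentPrimaryFamily Λ Δ P Q x)
    (hc : c ∈ familyClosure Δ Λ x) :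
    ∃ d ∈ Δ, ∃ n : ℕ, ∃ lam : Fin n → ι, ∃ cs : Fin n → C,
      (∀ i, lam i ∈ Λ) ∧ (∀ i j, i ≠ j → lam i ≠ lam j) ∧
      (∀ i, cs i ∈ (familyClosure Δ Λ x : Set C) ∩ P (lam i)) ∧ c = d + ∑ i, cs i := by
  obtain ⟨d, hd, y, hyΛ, hyX, rfl⟩ := exists_eq_add_finsuppSum_of_mem_familyClosure hc
  let e := y.support.equivFin.symm
  refine ⟨d, hd, _, fun i => e i, fun i => y (e i), fun i => hyΛ (e i).2,
    fun i j hij h => hij (e.injective (Subtype.ext h)), fun i => ⟨?_, ?_⟩, ?_⟩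
  · exact closure_range_le_familyClosure (hyΛ (e i).2) (hyX _)
  · exact hF.closure_range_le_primary (hyΛ (e i).2) (hyX _)
  · rw [Finsupp.sum, ← Finset.sum_coe_sort y.support, ← e.sum_comp]

theorem mem_delta_of_sum_mem_delta {α : Type*} [Fintype α]
    (hF : IsIndependentPrimaryFamily Λ Δ P Q x) {lam : α → ι} {cs : α → C}
    (hlam : ∀ i, lam i ∈ Λ) (hinj : ∀ i j, i ≠ j → lam i ≠ lam j)
    (hcs : ∀ i, cs i ∈ (familyClosure Δ Λ x : Set C) ∩ P (lam i)) (hsum : ∑ i, cs i ∈ Δ)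
    (i : α) : cs i ∈ Δ := by
  classical
  have hQ : cs i ∈ Q (lam i) := by
    rw [show cs i = ∑ j, cs j - ∑ j ∈ Finset.univ.erase i, cs j by
      rw [Finset.sum_erase_eq_sub (Finset.mem_univ i)]; abel]
    refine sub_mem (hF.delta_le_coprimary _ (hlam i) hsum) ?_
    exact hF.sum_mem_coprimary (f := lam) (hlam i) fun j hj =>
      ⟨hlam j, hinj i j (Finset.ne_of_mem_erase hj).symm, (hcs j).2⟩
  exact hF.mem_delta_of_mem_primary_of_mem_coprimary (hlam i) (hcs i).1 (hcs i).2 hQ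

theorem exists_forall_sub_mem_coprimary (hF : IsIndependentPrimaryFamily Λ Δ P Q x)
    {F : Finset ι} (hFΛ : ↑F ⊆ Λ) (d : ι → C) (hd : ∀ l ∈ F, d l ∈ familyClosure Δ Λ x) :
    ∃ c ∈ (familyClosure Δ Λ x : Set C),
      (∀ l ∈ F, c - d l ∈ Q l) ∧ ∀ l ∈ Λ, l ∉ F → c ∈ Q l := by
  classical
  choose! D hDSP hDQ using fun l (hl : l ∈ F) =>
    hF.exists_primary_sub_mem_coprimary (hFΛ hl) (hd l hl)
  have hrest : ∀ l ∈ Λ, ∑ m ∈ F.erase l, D m ∈ Q l := fun l hl =>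
    hF.sum_mem_coprimary hl fun m hm => ⟨hFΛ (Finset.mem_of_mem_erase hm),
      (Finset.ne_of_mem_erase hm).symm, (hDSP m (Finset.mem_of_mem_erase hm)).2⟩
  refine ⟨∑ m ∈ F, D m, sum_mem fun m hm => (hDSP m hm).1, fun l hl => ?_, fun l hl hlF => ?_⟩
  · rw [← Finset.add_sum_erase F D hl,
      show D l + ∑ m ∈ F.erase l, D m - d l = -(d l - D l) + ∑ m ∈ F.erase l, D m by abel]
    exact add_mem (neg_mem (hDQ l hl)) (hrest l (hFΛ hl))
  · rw [← Finset.erase_eq_of_notMem hlF]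
    exact hrest l hl

end IsIndependentPrimaryFamily
end PrimaryDecomposition
section

variable {K C R : Type*} [AddCommMonoid K] [AddCommGroup C] [CommRing R]
  {π : K →+ C} {σ : R →+* R} {χ : K → R}

theorem DeltaSet_subset_Cprim (σ : R →+* R) (l : R) : DeltaSet π χ ⊆ Cprim σ π χ l := by
  rintro _ ⟨k, rfl, hk⟩
  exact ⟨k, rfl, 0, by rwa [pow_zero, associated_one_iff_isUnit]⟩

theorem DeltaSet_subset_Cco {l : R} (hl : ¬IsUnit l) : DeltaSet π χ ⊆ Cco π χ l := by
  rintro _ ⟨k, rfl, hk⟩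
  exact ⟨k, rfl, fun hdvd => hl (isUnit_of_dvd_unit hdvd hk)⟩

theorem Irreducible.map_of_involutive (hσ : Function.Involutive σ) {m : R}
    (hm : Irreducible m) : Irreducible (σ m) :=
  (MulEquiv.irreducible_iff (RingEquiv.ofRingHom σ σ (RingHom.ext hσ) (RingHom.ext hσ))).mpr hm

theorem starAssoc_of_dvd_Sdual [IsDomain R] (hσ : Function.Involutive σ) {l m : R}
    (hl : Prime l) (hm : Irreducible m) (hdvd : l ∣ Sdual σ m) : StarAssoc σ l m := by
  have hl' : Irreducible l := hl.irreducible
  unfold Sdual at hdvd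
  split_ifs at hdvd
  · exact Or.inl (hl'.associated_of_dvd hm hdvd)
  · rcases hl.dvd_mul.mp hdvd with hdvd | hdvd
    · exact Or.inl (hl'.associated_of_dvd hm hdvd)
    · exact Or.inr (hl'.associated_of_dvd (hm.map_of_involutive hσ) hdvd)

theorem Cprim_subset_Cco [IsDomain R] (hσ : Function.Involutive σ) {l m : R}
    (hl : Prime l) (hm : Irreducible m) (hlm : ¬StarAssoc σ l m) :
    Cprim σ π χ m ⊆ Cco π χ l := by
  rintro _ ⟨k, rfl, n, hk⟩
  exact ⟨k, rfl, fun hdvd =>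
    hlm (starAssoc_of_dvd_Sdual hσ hl hm (hl.dvd_of_dvd_pow (hdvd.trans hk.dvd)))⟩

structure IsAssocMultiplicative (π : K →+ C) (χ : K → R) : Prop where
  ne_zero : ∀ k, χ k ≠ 0
  map_add : ∀ k k', Associated (χ (k + k')) (χ k * χ k')
  exists_neg : ∀ k, ∃ j, π j = -π k ∧ Associated (χ j) (χ k)

namespace IsAssocMultiplicative

variable [IsDomain R]

theorem isUnit_map_zero (h : IsAssocMultiplicative π χ) : IsUnit (χ 0) := by
  obtain ⟨u, hu⟩ := h.map_add 0 0
  rw [add_zero] at hu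
  exact mul_left_cancel₀ (h.ne_zero 0) hu ▸ u.isUnit

def deltaSubgroup (h : IsAssocMultiplicative π χ) : AddSubgroup C where
  carrier := DeltaSet π χ
  zero_mem' := ⟨0, map_zero π, h.isUnit_map_zero⟩
  add_mem' := by
    rintro _ _ ⟨k, rfl, hk⟩ ⟨k', rfl, hk'⟩
    exact ⟨k + k', π.map_add k k', (h.map_add k k').symm.isUnit (hk.mul hk')⟩
  neg_mem' := by
    rintro _ ⟨k, rfl, hk⟩
    obtain ⟨j, hj, hjk⟩ := h.exists_neg k
    exact ⟨j, hj, hjk.symm.isUnit hk⟩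

def primarySubgroup (h : IsAssocMultiplicative π χ) (σ : R →+* R) (l : R) :
    AddSubgroup C where
  carrier := Cprim σ π χ l
  zero_mem' := DeltaSet_subset_Cprim σ l h.deltaSubgroup.zero_mem
  add_mem' := by
    rintro _ _ ⟨k, rfl, n, hk⟩ ⟨k', rfl, n', hk'⟩
    refine ⟨k + k', π.map_add k k', n + n', ?_⟩
    rw [pow_add]
    exact (h.map_add k k').trans (hk.mul_mul hk')
  neg_mem' := by
    rintro _ ⟨k, rfl, n, hk⟩
    obtain ⟨j, hj, hjk⟩ := h.exists_neg k
    exact ⟨j, hj, n, hjk.trans hk⟩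

def coprimarySubgroup (h : IsAssocMultiplicative π χ) {l : R} (hl : Prime l) :
    AddSubgroup C where
  carrier := Cco π χ l
  zero_mem' := DeltaSet_subset_Cco hl.not_isUnit h.deltaSubgroup.zero_mem
  add_mem' := by
    rintro _ _ ⟨k, rfl, hk⟩ ⟨k', rfl, hk'⟩
    refine ⟨k + k', π.map_add k k', fun hdvd => ?_⟩
    rcases hl.dvd_mul.mp (hdvd.trans (h.map_add k k').dvd) with hdvd | hdvd
    exacts [hk hdvd, hk' hdvd]
  neg_mem' := by
    rintro _ ⟨k, rfl, hk⟩
    obtain ⟨j, hj, hjk⟩ := h.exists_neg k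
    exact ⟨j, hj, fun hdvd => hk (hdvd.trans hjk.dvd)⟩

theorem mem_Cco_of_mem_closure (h : IsAssocMultiplicative π χ) {l : R} (hl : Prime l) {c : C}
    (hc : c ∈ AddSubgroup.closure (Cco π χ l)) : c ∈ Cco π χ l :=
  (AddSubgroup.closure_le (h.coprimarySubgroup hl)).mpr subset_rfl hc

/-- `C^λ` is a subgroup only for prime `λ`; its closure is one for every `λ` and equals `C^λ`
on `Λ`. -/
theorem isIndependentPrimaryFamily [UniqueFactorizationMonoid R] (h : IsAssocMultiplicative π χ)
    (hσ : Function.Involutive σ) {Λ : Set R} (hΛirr : ∀ l ∈ Λ, Irreducible l)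
    (hΛ : ∀ l ∈ Λ, ∀ m ∈ Λ, l ≠ m → ¬ StarAssoc σ l m) {x : R → ℕ → C}
    (hx : ∀ l ∈ Λ, ∀ i : ℕ, x l i ∈ Cprim σ π χ l)
    (hind : ∀ l ∈ Λ, ∀ r : ℕ →₀ ℤ, (r.sum fun i ri => ri • x l i) ∈ Cco π χ l → r = 0) :
    PrimaryDecomposition.IsIndependentPrimaryFamily Λ h.deltaSubgroup (h.primarySubgroup σ)
      (fun l => AddSubgroup.closure (Cco π χ l)) x where
  delta_le_primary l _ := DeltaSet_subset_Cprim σ l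
  delta_le_coprimary l hl :=
    (DeltaSet_subset_Cco (hΛirr l hl).not_isUnit).trans AddSubgroup.subset_closure
  primary_le_coprimary l hl m hm hlm :=
    (Cprim_subset_Cco hσ (hΛirr l hl).prime (hΛirr m hm) (hΛ l hl m hm hlm)).trans
      AddSubgroup.subset_closure
  mem_primary := hx
  independent l hl r hr := hind l hl r (h.mem_Cco_of_mem_closure (hΛirr l hl).prime hr)

end IsAssocMultiplicative

end

theorem statement9_general
    {K C R : Type*} [AddCommMonoid K] [AddCommGroup C]
    [CommRing R] [IsDomain R] [UniqueFactorizationMonoid R]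
    (π : K →+ C)
    (σ : R →+* R) (hσ : ∀ r, σ (σ r) = r)
    (χ : K → R) (hχ : ∀ k, χ k ≠ 0)
    (hD2 : ∀ k k', Associated (χ (k + k')) (χ k * χ k'))
    (hD3 : ∀ k, ∃ j, π j = -π k ∧ Associated (χ j) (χ k))
    (Λ : Set R) (hΛirr : ∀ l ∈ Λ, Irreducible l)
    (hΛ : ∀ l ∈ Λ, ∀ m ∈ Λ, l ≠ m → ¬ StarAssoc σ l m)
    (x : R → ℕ → C)
    (hx : ∀ l ∈ Λ, ∀ i : ℕ, x l i ∈ Cprim σ π χ l)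
    (hind : ∀ l ∈ Λ, ∀ r : ℕ →₀ ℤ,
      (r.sum fun i ri => ri • x l i) ∈ Cco π χ l → r = 0) :
    -- (1) `S ∩ C_λ` is the subgroup generated by `Δ` and the `x λ i`
    (∀ l ∈ Λ, (Sgen π χ Λ x : Set C) ∩ Cprim σ π χ l
      = (AddSubgroup.closure (DeltaSet π χ ∪ Set.range (x l)) : Set C)) ∧
    -- (2) `(S ∩ C_λ)/Δ` is free abelian with basis the classes of the `x λ i`,
    --     and `(S ∩ C_λ)/Δ → S/(S ∩ C^λ)` is an isomorphism
    (∀ l ∈ Λ,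
      (∀ c ∈ (Sgen π χ Λ x : Set C) ∩ Cprim σ π χ l, ∃ r : ℕ →₀ ℤ,
        c - (r.sum fun i ri => ri • x l i) ∈ DeltaSet π χ) ∧
      (∀ r : ℕ →₀ ℤ, (r.sum fun i ri => ri • x l i) ∈ DeltaSet π χ → r = 0) ∧
      (∀ c ∈ (Sgen π χ Λ x : Set C) ∩ Cprim σ π χ l,
        c ∈ Cco π χ l → c ∈ DeltaSet π χ) ∧
      (∀ c ∈ (Sgen π χ Λ x : Set C),
        ∃ d ∈ (Sgen π χ Λ x : Set C) ∩ Cprim σ π χ l, c - d ∈ Cco π χ l)) ∧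
    -- (3) `⊕_{λ∈Λ} (S ∩ C_λ)/Δ → S/Δ` is an isomorphism
    ((∀ c ∈ (Sgen π χ Λ x : Set C), ∃ d ∈ DeltaSet π χ, ∃ n : ℕ,
        ∃ lam : Fin n → R, ∃ cs : Fin n → C,
        (∀ i, lam i ∈ Λ) ∧ (∀ i j, i ≠ j → lam i ≠ lam j) ∧
        (∀ i, cs i ∈ (Sgen π χ Λ x : Set C) ∩ Cprim σ π χ (lam i)) ∧
        c = d + ∑ i, cs i) ∧
     (∀ (n : ℕ) (lam : Fin n → R) (cs : Fin n → C),
        (∀ i, lam i ∈ Λ) → (∀ i j, i ≠ j → lam i ≠ lam j) →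
        (∀ i, cs i ∈ (Sgen π χ Λ x : Set C) ∩ Cprim σ π χ (lam i)) →
        (∑ i, cs i) ∈ DeltaSet π χ → ∀ i, cs i ∈ DeltaSet π χ)) ∧
    -- (4) `S/Δ → ⊕_{λ∈Λ} S/(S ∩ C^λ)` is an isomorphism
    ((∀ c ∈ (Sgen π χ Λ x : Set C), (∀ l ∈ Λ, c ∈ Cco π χ l) → c ∈ DeltaSet π χ) ∧
     (∀ F : Finset R, ↑F ⊆ Λ → ∀ d : R → C, (∀ l ∈ F, d l ∈ Sgen π χ Λ x) →
        ∃ c ∈ (Sgen π χ Λ x : Set C),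
          (∀ l ∈ F, c - d l ∈ Cco π χ l) ∧
          ∀ l ∈ Λ, l ∉ F → c ∈ Cco π χ l)) := by
  have hχ' : IsAssocMultiplicative π χ := ⟨hχ, hD2, hD3⟩
  have hF := hχ'.isIndependentPrimaryFamily hσ hΛirr hΛ hx hind
  have hQ : ∀ l ∈ Λ, ∀ {c}, c ∈ AddSubgroup.closure (Cco π χ l) → c ∈ Cco π χ l :=
    fun l hl _ => hχ'.mem_Cco_of_mem_closure (hΛirr l hl).prime
  refine ⟨fun l hl => hF.familyClosure_inter_primary hl, fun l hl => ⟨?_, ?_, ?_, ?_⟩,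
    ⟨fun c hc => hF.exists_eq_add_sum_primary hc, fun n lam cs => hF.mem_delta_of_sum_mem_delta⟩,
    ?_, ?_⟩
  · exact fun c hc => hF.exists_sub_finsuppSum_mem_delta hl hc.1 hc.2
  · exact hF.eq_zero_of_finsuppSum_mem_delta hl
  · exact fun c hc hcQ =>
      hF.mem_delta_of_mem_primary_of_mem_coprimary hl hc.1 hc.2 (AddSubgroup.subset_closure hcQ)
  · intro c hc
    obtain ⟨D, hD, hcD⟩ := hF.exists_primary_sub_mem_coprimary hl hc
    exact ⟨D, hD, hQ l hl hcD⟩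
  · exact fun c hc hcQ =>
      hF.mem_delta_of_forall_mem_coprimary hc fun l hl => AddSubgroup.subset_closure (hcQ l hl)
  · intro F hFΛ d hd
    obtain ⟨c, hc, hcd, hcF⟩ := hF.exists_forall_sub_mem_coprimary hFΛ d hd
    exact ⟨c, hc, fun l hl => hQ l (hFΛ hl) (hcd l hl), fun l hl hlF => hQ l hl (hcF l hl hlF)⟩

/-- Given a set `Λ` of pairwise non-`*`-associate irreducibles and, for each `λ ∈ Λ`,
a sequence `x λ i ∈ C_λ` whose nontrivial integral linear combinations never lie in
`C^λ`, the subgroup `S` generated by `Δ` and the `x λ i` satisfies: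
(1) `S ∩ C_λ` is generated by `Δ` and the `x λ i`;
(2) `(S ∩ C_λ)/Δ` is free abelian on the classes of the `x λ i`, and the natural map
`(S ∩ C_λ)/Δ → S/(S ∩ C^λ)` is an isomorphism;
(3) `⊕_{λ∈Λ} (S ∩ C_λ)/Δ → S/Δ` is an isomorphism;
(4) `S/Δ → ⊕_{λ∈Λ} S/(S ∩ C^λ)` is an isomorphism. -/
theorem statement9
    {K C R : Type*} [AddCommMonoid K] [AddCommGroup C]
    [CommRing R] [IsDomain R] [UniqueFactorizationMonoid R]
    (π : K →+ C) (hπ : Function.Surjective π)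
    (σ : R →+* R) (hσ : ∀ r, σ (σ r) = r)
    (χ : K → R) (hχ : ∀ k, χ k ≠ 0)
    (hD1 : ∀ k, Associated (σ (χ k)) (χ k))
    (hD2 : ∀ k k', Associated (χ (k + k')) (χ k * χ k'))
    (hD3 : ∀ k, ∃ j, π j = -π k ∧ Associated (χ j) (χ k))
    (Λ : Set R) (hΛirr : ∀ l ∈ Λ, Irreducible l)
    (hΛ : ∀ l ∈ Λ, ∀ m ∈ Λ, l ≠ m → ¬ StarAssoc σ l m)
    (x : R → ℕ → C)
    (hx : ∀ l ∈ Λ, ∀ i : ℕ, x l i ∈ Cprim σ π χ l)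
    (hind : ∀ l ∈ Λ, ∀ r : ℕ →₀ ℤ,
      (r.sum fun i ri => ri • x l i) ∈ Cco π χ l → r = 0) :
    -- (1) `S ∩ C_λ` is the subgroup generated by `Δ` and the `x λ i`
    (∀ l ∈ Λ, (Sgen π χ Λ x : Set C) ∩ Cprim σ π χ l
      = (AddSubgroup.closure (DeltaSet π χ ∪ Set.range (x l)) : Set C)) ∧
    -- (2) `(S ∩ C_λ)/Δ` is free abelian with basis the classes of the `x λ i`,
    --     and `(S ∩ C_λ)/Δ → S/(S ∩ C^λ)` is an isomorphism
    (∀ l ∈ Λ,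
      (∀ c ∈ (Sgen π χ Λ x : Set C) ∩ Cprim σ π χ l, ∃ r : ℕ →₀ ℤ,
        c - (r.sum fun i ri => ri • x l i) ∈ DeltaSet π χ) ∧
      (∀ r : ℕ →₀ ℤ, (r.sum fun i ri => ri • x l i) ∈ DeltaSet π χ → r = 0) ∧
      (∀ c ∈ (Sgen π χ Λ x : Set C) ∩ Cprim σ π χ l,
        c ∈ Cco π χ l → c ∈ DeltaSet π χ) ∧
      (∀ c ∈ (Sgen π χ Λ x : Set C),
        ∃ d ∈ (Sgen π χ Λ x : Set C) ∩ Cprim σ π χ l, c - d ∈ Cco π χ l)) ∧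
    -- (3) `⊕_{λ∈Λ} (S ∩ C_λ)/Δ → S/Δ` is an isomorphism
    ((∀ c ∈ (Sgen π χ Λ x : Set C), ∃ d ∈ DeltaSet π χ, ∃ n : ℕ,
        ∃ lam : Fin n → R, ∃ cs : Fin n → C,
        (∀ i, lam i ∈ Λ) ∧ (∀ i j, i ≠ j → lam i ≠ lam j) ∧
        (∀ i, cs i ∈ (Sgen π χ Λ x : Set C) ∩ Cprim σ π χ (lam i)) ∧
        c = d + ∑ i, cs i) ∧
     (∀ (n : ℕ) (lam : Fin n → R) (cs : Fin n → C),
        (∀ i, lam i ∈ Λ) → (∀ i j, i ≠ j → lam i ≠ lam j) →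
        (∀ i, cs i ∈ (Sgen π χ Λ x : Set C) ∩ Cprim σ π χ (lam i)) →
        (∑ i, cs i) ∈ DeltaSet π χ → ∀ i, cs i ∈ DeltaSet π χ)) ∧
    -- (4) `S/Δ → ⊕_{λ∈Λ} S/(S ∩ C^λ)` is an isomorphism
    ((∀ c ∈ (Sgen π χ Λ x : Set C), (∀ l ∈ Λ, c ∈ Cco π χ l) → c ∈ DeltaSet π χ) ∧
     (∀ F : Finset R, ↑F ⊆ Λ → ∀ d : R → C, (∀ l ∈ F, d l ∈ Sgen π χ Λ x) →
        ∃ c ∈ (Sgen π χ Λ x : Set C),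
          (∀ l ∈ F, c - d l ∈ Cco π χ l) ∧
          ∀ l ∈ Λ, l ∉ F → c ∈ Cco π χ l)) :=
  statement9_general π σ hσ χ hχ hD2 hD3 Λ hΛirr hΛ x hx hind
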